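/- Let u : ℝ × ℝ → ℝ be a C^∞ function, 2π-periodic in its first argument, such that for every t the function u(·,t) belongs to E_N (i.e. u(x,t) = Σ_{0<|n|≤N} c_n(t) e^{inx} with c_{−n} = conj(c_n)), and suppose u solves ∂_t u + ∂_x³ u = ℙ_N( ℙ(u³) ∂_x u ) for all (x,t). Then the function t ↦ (1/2) ∫₀^{2π} (∂_x u(x,t))² dx + (1/20) ∫₀^{2π} u(x,t)⁵ dx is constant on ℝ. -/

import Mathlib

/-!
Along any smooth periodic flow, `dH/dt = (1/4) ∫ u⁴ ∂ₜu - ∫ ∂ₓ²u ∂ₜu` (differentiate under the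
integral, commute `∂ₜ` and `∂ₓ`, integrate by parts). Write the nonlinearity as
`w = (u³ - m) ∂ₓu = ∂ₓq` with `q = u⁴/4 - m u`, `m` the mean of `u³`. For a symmetric set of
frequencies, `ℙ_N` is symmetric for the `L²` pairing and fixes `E_N`, which is stable under `∂ₓ`;
moreover `∫ q ℙ_N(∂ₓq) = 0`, its Fourier expansion being odd in `n`. Splitting `u⁴ = 4q + 4mu`
therefore gives `∫ u⁴ ℙ_N w = 4m ∫ u w = 0`, while `∫ ∂ₓ²u ℙ_N w = ∫ ∂ₓ²u w = ∫ u³ ∂ₓu ∂ₓ²u =: J`.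
The dispersive part contributes `∫ ∂ₓ²u ∂ₓ³u = 0` and `∫ u⁴ ∂ₓ³u = -4J`, so `dH/dt = J - J = 0`.
-/

open scoped Real

/-- The `n`-th Fourier coefficient `ŵ(n) = (1/2π) ∫₀^{2π} w(y) e^{-iny} dy` of a
`2π`-periodic real-valued function `w`. -/
noncomputable def fourierCoefOn (w : ℝ → ℝ) (n : ℤ) : ℂ :=
  (1 / (2 * (π : ℂ))) * ∫ y in (0:ℝ)..(2 * π), (w y : ℂ) * Complex.exp (-(Complex.I * n * y))

open scoped ContDiff
open Function

section OneVariable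

variable {𝕜 E : Type*} [NontriviallyNormedField 𝕜] [NormedAddCommGroup E] [NormedSpace 𝕜 E]

theorem Function.Periodic.deriv {f : 𝕜 → E} {T : 𝕜} (hf : Periodic f T) :
    Periodic (deriv f) T := by
  intro x
  rw [← deriv_comp_add_const, funext hf]

theorem Function.Periodic.iteratedDeriv {f : 𝕜 → E} {T : 𝕜} (hf : Periodic f T) (k : ℕ) :
    Periodic (iteratedDeriv k f) T := by
  induction k with
  | zero => simpa using hf
  | succ k ih => simpa [iteratedDeriv_succ] using ih.deriv

theorem ContDiff.hasDerivAt_iteratedDeriv {n : WithTop ℕ∞} {f : 𝕜 → E} (hf : ContDiff 𝕜 n f)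
    {k : ℕ} (hk : k < n) (x : 𝕜) :
    HasDerivAt (iteratedDeriv k f) (iteratedDeriv (k + 1) f x) x := by
  rw [iteratedDeriv_succ]
  exact (hf.differentiable_iteratedDeriv k hk x).hasDerivAt

end OneVariable

theorem integral_eq_of_hasDerivAt_sub_of_periodic {E : Type*} [NormedAddCommGroup E]
    [NormedSpace ℝ E] [CompleteSpace E] {f g F : ℝ → E} {T : ℝ}
    (hf : Continuous f) (hg : Continuous g) (hF : ∀ x, HasDerivAt F (f x - g x) x)
    (hper : Periodic F T) : ∫ x in (0:ℝ)..T, f x = ∫ x in (0:ℝ)..T, g x := by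
  rw [← sub_eq_zero, ← intervalIntegral.integral_sub (hf.intervalIntegrable _ _)
    (hg.intervalIntegrable _ _), intervalIntegral.integral_eq_sub_of_hasDerivAt (fun x _ => hF x)
    ((hf.sub hg).intervalIntegrable _ _)]
  simpa using sub_eq_zero.2 (hper 0)

theorem hasDerivAt_integral_of_continuous_deriv {F F' : ℝ → ℝ → ℝ} {a b : ℝ}
    (hF : Continuous (uncurry F)) (hF' : Continuous (uncurry F'))
    (hderiv : ∀ x t, HasDerivAt (F x) (F' x t) t) (t₀ : ℝ) :
    HasDerivAt (fun t => ∫ x in a..b, F x t) (∫ x in a..b, F' x t₀) t₀ := by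
  obtain ⟨C, hC⟩ := (isCompact_uIcc.prod (isCompact_closedBall t₀ 1)).exists_bound_of_continuousOn
    hF'.continuousOn
  refine (intervalIntegral.hasDerivAt_integral_of_dominated_loc_of_deriv_le
    (F := fun t x => F x t) (bound := fun _ => C) (Metric.ball_mem_nhds t₀ one_pos)
    (Filter.Eventually.of_forall fun t => (hF.uncurry_right t).aestronglyMeasurable)
    ((hF.uncurry_right t₀).intervalIntegrable _ _)
    (hF'.uncurry_right t₀).aestronglyMeasurable ?_ intervalIntegrable_const
    (Filter.Eventually.of_forall fun x _ t _ => hderiv x t)).2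
  exact Filter.Eventually.of_forall fun x hx t ht =>
    hC (x, t) ⟨Set.uIoc_subset_uIcc hx, Metric.ball_subset_closedBall ht⟩

section PartialDerivatives

variable {f : ℝ → ℝ → ℝ}

noncomputable def partialX (f : ℝ → ℝ → ℝ) (x t : ℝ) : ℝ := deriv (fun y => f y t) x

noncomputable def partialT (f : ℝ → ℝ → ℝ) (x t : ℝ) : ℝ := deriv (fun s => f x s) t

theorem partialX_eq_fderiv {x t : ℝ} (hf : DifferentiableAt ℝ (uncurry f) (x, t)) :
    partialX f x t = fderiv ℝ (uncurry f) (x, t) (1, 0) :=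
  (hf.hasFDerivAt.comp_hasDerivAt (f := fun y => (y, t)) x
    ((hasDerivAt_id x).prodMk (hasDerivAt_const x t))).deriv

theorem partialT_eq_fderiv {x t : ℝ} (hf : DifferentiableAt ℝ (uncurry f) (x, t)) :
    partialT f x t = fderiv ℝ (uncurry f) (x, t) (0, 1) :=
  (hf.hasFDerivAt.comp_hasDerivAt (f := fun s => (x, s)) t
    ((hasDerivAt_const t x).prodMk (hasDerivAt_id t))).deriv

theorem hasDerivAt_partialX {x t : ℝ} (hf : DifferentiableAt ℝ (uncurry f) (x, t)) :
    HasDerivAt (fun y => f y t) (partialX f x t) x :=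
  (hf.comp (f := fun y => (y, t)) x
    (differentiableAt_id.prodMk (differentiableAt_const t))).hasDerivAt

theorem hasDerivAt_partialT {x t : ℝ} (hf : DifferentiableAt ℝ (uncurry f) (x, t)) :
    HasDerivAt (fun s => f x s) (partialT f x t) t :=
  (hf.comp (f := fun s => (x, s)) t
    ((differentiableAt_const x).prodMk differentiableAt_id)).hasDerivAt

theorem contDiff_partialX (hf : ContDiff ℝ ∞ (uncurry f)) :
    ContDiff ℝ ∞ (uncurry (partialX f)) := by
  have hdiff : Differentiable ℝ (uncurry f) := hf.differentiable (by simp)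
  simpa only [uncurry_def, partialX_eq_fderiv (hdiff _)] using
    (hf.fderiv_right (by simp)).clm_apply (contDiff_const (c := ((1 : ℝ), (0 : ℝ))))

theorem contDiff_partialT (hf : ContDiff ℝ ∞ (uncurry f)) :
    ContDiff ℝ ∞ (uncurry (partialT f)) := by
  have hdiff : Differentiable ℝ (uncurry f) := hf.differentiable (by simp)
  simpa only [uncurry_def, partialT_eq_fderiv (hdiff _)] using
    (hf.fderiv_right (by simp)).clm_apply (contDiff_const (c := ((0 : ℝ), (1 : ℝ))))

theorem partialT_partialX (hf : ContDiff ℝ 2 (uncurry f)) (x t : ℝ) :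
    partialT (partialX f) x t = partialX (partialT f) x t := by
  have hdiff : Differentiable ℝ (uncurry f) := hf.differentiable (by simp)
  have hf' : ContDiff ℝ 1 (fderiv ℝ (uncurry f)) := hf.fderiv_right (by norm_num)
  have hpartial (v : ℝ × ℝ) :
      DifferentiableAt ℝ (fun p => fderiv ℝ (uncurry f) p v) (x, t) ∧
      fderiv ℝ (fun p => fderiv ℝ (uncurry f) p v) (x, t) =
        fun w => fderiv ℝ (fderiv ℝ (uncurry f)) (x, t) w v := by
    have h2 := hf'.differentiable one_ne_zero (x, t)
    refine ⟨h2.clm_apply (differentiableAt_const v), ?_⟩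
    rw [fderiv_clm_apply h2 (differentiableAt_const v)]
    ext w
    simp
  have hX : uncurry (partialX f) = fun p => fderiv ℝ (uncurry f) p (1, 0) :=
    funext fun p => partialX_eq_fderiv (hdiff p)
  have hT : uncurry (partialT f) = fun p => fderiv ℝ (uncurry f) p (0, 1) :=
    funext fun p => partialT_eq_fderiv (hdiff p)
  rw [partialT_eq_fderiv (by rw [hX]; exact (hpartial _).1),
    partialX_eq_fderiv (by rw [hT]; exact (hpartial _).1), hX, hT, (hpartial _).2,
    (hpartial _).2]
  exact hf.contDiffAt.isSymmSndFDerivAt (by simp) _ _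

end PartialDerivatives

theorem hasDerivAt_hamiltonian {u : ℝ → ℝ → ℝ} {T : ℝ} (hu : ContDiff ℝ ∞ (uncurry u))
    (hper : ∀ t, Periodic (fun x => u x t) T) (t : ℝ) :
    HasDerivAt
      (fun t => 1 / 2 * (∫ x in (0:ℝ)..T, partialX u x t ^ 2) +
        1 / 20 * ∫ x in (0:ℝ)..T, u x t ^ 5)
      (1 / 4 * (∫ x in (0:ℝ)..T, u x t ^ 4 * partialT u x t) -
        ∫ x in (0:ℝ)..T, iteratedDeriv 2 (fun y => u y t) x * partialT u x t) t := by
  have hux := contDiff_partialX hu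
  have hut := contDiff_partialT hu
  have hutx := contDiff_partialX hut
  have hdiff {g : ℝ → ℝ → ℝ} (hg : ContDiff ℝ ∞ (uncurry g)) : Differentiable ℝ (uncurry g) :=
    hg.differentiable (by simp)
  have hA : HasDerivAt (fun t => ∫ x in (0:ℝ)..T, partialX u x t ^ 2)
      (∫ x in (0:ℝ)..T, 2 * (partialX u x t * partialX (partialT u) x t)) t := by
    refine hasDerivAt_integral_of_continuous_deriv (F := fun x t => partialX u x t ^ 2)
      (F' := fun x t => 2 * (partialX u x t * partialX (partialT u) x t)) (by fun_prop)
      (by fun_prop) (fun x s => ?_) t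
    rw [← partialT_partialX (hu.of_le (by norm_cast))]
    exact ((hasDerivAt_partialT (hdiff hux _)).pow 2).congr_deriv (by ring)
  have hB : HasDerivAt (fun t => ∫ x in (0:ℝ)..T, u x t ^ 5)
      (∫ x in (0:ℝ)..T, 5 * (u x t ^ 4 * partialT u x t)) t := by
    refine hasDerivAt_integral_of_continuous_deriv (F := fun x t => u x t ^ 5)
      (F' := fun x t => 5 * (u x t ^ 4 * partialT u x t)) (by fun_prop) (by fun_prop)
      (fun x s => ?_) t
    exact ((hasDerivAt_partialT (hdiff hu _)).pow 5).congr_deriv (by ring)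
  have hibp : ∫ x in (0:ℝ)..T, partialX u x t * partialX (partialT u) x t =
      -∫ x in (0:ℝ)..T, iteratedDeriv 2 (fun y => u y t) x * partialT u x t := by
    have huxx := contDiff_partialX hux
    have hper_ut : Periodic (fun x => partialT u x t) T :=
      fun x => congrArg (deriv · t) (funext fun s => hper s x)
    have huxx_eq : iteratedDeriv 2 (fun y => u y t) = fun x => partialX (partialX u) x t := by
      rw [iteratedDeriv_eq_iterate]; rfl
    rw [← intervalIntegral.integral_neg, huxx_eq]
    refine integral_eq_of_hasDerivAt_sub_of_periodic (F := fun x => partialX u x t * partialT u x t)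
      (by fun_prop) (by fun_prop) (fun x => ?_) ((hper t).deriv.mul hper_ut)
    exact ((hasDerivAt_partialX (hdiff hux _)).mul (hasDerivAt_partialX (hdiff hut _))).congr_deriv
      (by ring)
  refine ((hA.const_mul (1 / 2)).add (hB.const_mul (1 / 20))).congr_deriv ?_
  rw [intervalIntegral.integral_const_mul, intervalIntegral.integral_const_mul, hibp]
  ring

theorem Finset.sum_comp_neg_of_map_neg {M : Type*} [AddCommMonoid M] {S : Finset ℤ}
    (hS : S.map (Equiv.neg ℤ).toEmbedding = S) (φ : ℤ → M) :
    ∑ n ∈ S, φ (-n) = ∑ n ∈ S, φ n := by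
  conv_rhs => rw [← hS, Finset.sum_map]
  rfl

section FourierProjection

open Complex (I exp)

-- `ℙ_S w`, complex-valued; `f ∈ E_S` is encoded as `∀ x, (f x : ℂ) = fourierProj S f x`.
noncomputable def fourierProj (S : Finset ℤ) (w : ℝ → ℝ) (x : ℝ) : ℂ :=
  ∑ n ∈ S, fourierCoefOn w n * exp (I * n * x)

variable {S : Finset ℤ} {f f' g : ℝ → ℝ}

theorem hasDerivAt_cexp_mul_ofReal (c : ℂ) (x : ℝ) :
    HasDerivAt (fun y : ℝ => exp (c * y)) (c * exp (c * x)) x :=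
  (((hasDerivAt_id (x : ℂ)).const_mul c).cexp.comp_ofReal).congr_deriv (by simp [mul_comm])

theorem periodic_cexp_I_mul_int (n : ℤ) : Periodic (fun x : ℝ => exp (I * n * x)) (2 * π) := by
  intro x
  simp only
  rw [show I * n * ↑(x + 2 * π) = I * n * x + n * (2 * π * I) by push_cast; ring,
    Complex.exp_add, Complex.exp_int_mul_two_pi_mul_I, mul_one]

theorem continuous_fourierProj (S : Finset ℤ) (w : ℝ → ℝ) : Continuous (fourierProj S w) :=
  continuous_finsetSum _ fun n _ => by fun_prop

theorem integral_ofReal_mul_exp (g : ℝ → ℝ) (n : ℤ) :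
    ∫ x in (0:ℝ)..2 * π, (g x : ℂ) * exp (I * n * x) = 2 * π * fourierCoefOn g (-n) := by
  rw [fourierCoefOn, ← mul_assoc, mul_one_div_cancel (by simp [Real.pi_ne_zero]), one_mul]
  push_cast
  simp only [neg_mul, mul_neg, neg_neg]

theorem integral_ofReal_mul_fourierProj (hf : Continuous f) (S : Finset ℤ) (g : ℝ → ℝ) :
    ∫ x in (0:ℝ)..2 * π, (f x : ℂ) * fourierProj S g x =
      2 * π * ∑ n ∈ S, fourierCoefOn g n * fourierCoefOn f (-n) := by
  simp_rw [fourierProj, Finset.mul_sum, mul_left_comm (f _ : ℂ)]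
  rw [intervalIntegral.integral_finsetSum fun n _ =>
    (by fun_prop : Continuous _).intervalIntegrable _ _]
  simp_rw [intervalIntegral.integral_const_mul, integral_ofReal_mul_exp]
  exact Finset.sum_congr rfl fun n _ => by ring

theorem integral_ofReal_mul_fourierProj_comm (hS : S.map (Equiv.neg ℤ).toEmbedding = S)
    (hf : Continuous f) (hg : Continuous g) :
    ∫ x in (0:ℝ)..2 * π, (f x : ℂ) * fourierProj S g x =
      ∫ x in (0:ℝ)..2 * π, (g x : ℂ) * fourierProj S f x := by
  rw [integral_ofReal_mul_fourierProj hf, integral_ofReal_mul_fourierProj hg,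
    ← Finset.sum_comp_neg_of_map_neg hS]
  simp_rw [neg_neg, mul_comm]

theorem integral_ofReal_mul_fourierProj_of_fixed (hS : S.map (Equiv.neg ℤ).toEmbedding = S)
    (hf : Continuous f) (hg : Continuous g) (hgS : ∀ x, (g x : ℂ) = fourierProj S g x) :
    ∫ x in (0:ℝ)..2 * π, (g x : ℂ) * fourierProj S f x = ↑(∫ x in (0:ℝ)..2 * π, f x * g x) := by
  rw [← integral_ofReal_mul_fourierProj_comm hS hf hg, ← intervalIntegral.integral_ofReal]
  simp_rw [← hgS, Complex.ofReal_mul]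

theorem fourierCoefOn_deriv (hf : ∀ x, HasDerivAt f (f' x) x) (hf' : Continuous f')
    (hper : Periodic f (2 * π)) (n : ℤ) :
    fourierCoefOn f' n = I * n * fourierCoefOn f n := by
  have hexp : ∀ y : ℝ, -(I * n * y) = I * (-n : ℤ) * y := fun y => by push_cast; ring
  have hF : ∀ x, HasDerivAt (fun y => (f y : ℂ) * exp (-(I * n * y)))
      ((f' x : ℂ) * exp (-(I * n * x)) - I * n * ((f x : ℂ) * exp (-(I * n * x)))) x := by
    intro x
    simp_rw [hexp]
    exact ((hf x).ofReal_comp.mul (hasDerivAt_cexp_mul_ofReal _ x)).congr_deriv (by push_cast; ring)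
  have hcont : Continuous f := continuous_iff_continuousAt.2 fun x => (hf x).continuousAt
  have key := integral_eq_of_hasDerivAt_sub_of_periodic (by fun_prop) (by fun_prop) hF
    (by simp_rw [hexp]; exact (hper.comp ((↑) : ℝ → ℂ)).mul (periodic_cexp_I_mul_int (-n)))
  rw [fourierCoefOn, fourierCoefOn, key, intervalIntegral.integral_const_mul]
  ring

theorem integral_ofReal_mul_fourierProj_deriv_self (hS : S.map (Equiv.neg ℤ).toEmbedding = S)
    (hf : ∀ x, HasDerivAt f (f' x) x) (hf' : Continuous f') (hper : Periodic f (2 * π)) :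
    ∫ x in (0:ℝ)..2 * π, (f x : ℂ) * fourierProj S f' x = 0 := by
  have hodd : (fun n : ℤ => I * n * fourierCoefOn f n * fourierCoefOn f (-n)).Odd := fun n => by
    simp only [neg_neg, Int.cast_neg]
    ring
  rw [integral_ofReal_mul_fourierProj (continuous_iff_continuousAt.2 fun x => (hf x).continuousAt)]
  simp_rw [fourierCoefOn_deriv hf hf' hper, hodd.finsetSum_eq_zero hS, mul_zero]

theorem fourierProj_deriv_of_fixed (hf : ∀ x, HasDerivAt f (f' x) x) (hf' : Continuous f')
    (hper : Periodic f (2 * π)) (hfS : ∀ x, (f x : ℂ) = fourierProj S f x) (x : ℝ) :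
    (f' x : ℂ) = fourierProj S f' x := by
  have hsum : HasDerivAt (fourierProj S f) (fourierProj S f' x) x := by
    simp_rw [fourierProj, fourierCoefOn_deriv hf hf' hper]
    exact HasDerivAt.fun_sum fun n _ =>
      ((hasDerivAt_cexp_mul_ofReal _ x).const_mul _).congr_deriv (by ring)
  exact (hf x).ofReal_comp.unique (by simpa only [← funext hfS] using hsum)

theorem fourierProj_iteratedDeriv_of_fixed {n : WithTop ℕ∞} (hf : ContDiff ℝ n f)
    (hper : Periodic f (2 * π)) (hfS : ∀ x, (f x : ℂ) = fourierProj S f x) {k : ℕ} (hk : k ≤ n)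
    (x : ℝ) : ((iteratedDeriv k f x : ℝ) : ℂ) = fourierProj S (iteratedDeriv k f) x := by
  induction k generalizing x with
  | zero => simpa using hfS x
  | succ k ih =>
    have hk' : (k : WithTop ℕ∞) < n := lt_of_lt_of_le (by exact_mod_cast k.lt_succ_self) hk
    exact fourierProj_deriv_of_fixed (hf.hasDerivAt_iteratedDeriv hk')
      (hf.continuous_iteratedDeriv _ hk) (hper.iteratedDeriv k) (ih hk'.le) x

end FourierProjection

section FixedTime

variable {S : Finset ℤ} {U W : ℝ → ℝ} {m : ℝ}

theorem ofReal_integral_mul_eq_integral_mul_fourierProj_sub {V w g : ℝ → ℝ} (hV : Continuous V)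
    (hW : ∀ x, ((W x + V x : ℝ) : ℂ) = fourierProj S w x) (hg : Continuous g) :
    ((∫ x in (0:ℝ)..2 * π, g x * W x : ℝ) : ℂ) =
      (∫ x in (0:ℝ)..2 * π, (g x : ℂ) * fourierProj S w x) - ↑(∫ x in (0:ℝ)..2 * π, g x * V x) := by
  have hpoint : ∀ x,
      ((g x * W x : ℝ) : ℂ) = (g x : ℂ) * fourierProj S w x - ((g x * V x : ℝ) : ℂ) :=
    fun x => by rw [← hW x]; push_cast; ring
  have := continuous_fourierProj S w
  rw [← intervalIntegral.integral_ofReal, ← intervalIntegral.integral_ofReal]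
  simp_rw [hpoint]
  exact intervalIntegral.integral_sub ((by fun_prop : Continuous _).intervalIntegrable _ _)
    ((by fun_prop : Continuous _).intervalIntegrable _ _)

theorem integral_iteratedDeriv_two_mul_eq (hS : S.map (Equiv.neg ℤ).toEmbedding = S)
    (hU : ContDiff ℝ 3 U) (hper : Periodic U (2 * π)) (hUS : ∀ x, (U x : ℂ) = fourierProj S U x)
    (hW : ∀ x, ((W x + iteratedDeriv 3 U x : ℝ) : ℂ) =
      fourierProj S (fun y => (U y ^ 3 - m) * deriv U y) x) :
    ∫ x in (0:ℝ)..2 * π, iteratedDeriv 2 U x * W x =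
      ∫ x in (0:ℝ)..2 * π, U x ^ 3 * deriv U x * iteratedDeriv 2 U x := by
  have hU1 : ∀ x, HasDerivAt (deriv U) (iteratedDeriv 2 U x) x := by
    simpa using hU.hasDerivAt_iteratedDeriv (k := 1) (by norm_num)
  have hU2 := hU.hasDerivAt_iteratedDeriv (k := 2) (by norm_num)
  have hc1 : Continuous (deriv U) := hU.continuous_deriv (by norm_num)
  have hc2 := hU.continuous_iteratedDeriv 2 (by norm_num)
  have hc3 := hU.continuous_iteratedDeriv 3 le_rfl
  have hc0 := hU.continuous
  have hpair := ofReal_integral_mul_eq_integral_mul_fourierProj_sub hc3 hW hc2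
  rw [integral_ofReal_mul_fourierProj_of_fixed hS (by fun_prop) hc2
    (fourierProj_iteratedDeriv_of_fixed hU hper hUS (by norm_num))] at hpair
  have hnonlin : ∫ x in (0:ℝ)..2 * π, (U x ^ 3 - m) * deriv U x * iteratedDeriv 2 U x =
      ∫ x in (0:ℝ)..2 * π, U x ^ 3 * deriv U x * iteratedDeriv 2 U x :=
    integral_eq_of_hasDerivAt_sub_of_periodic (F := fun x => -(m / 2) * deriv U x ^ 2)
      (by fun_prop) (by fun_prop) (fun x => ((hU1 x).pow 2 |>.const_mul _).congr_deriv (by ring))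
      (hper.deriv.comp fun v => -(m / 2) * v ^ 2)
  have hdisp : ∫ x in (0:ℝ)..2 * π, iteratedDeriv 2 U x * iteratedDeriv 3 U x =
      ∫ x in (0:ℝ)..2 * π, (0 : ℝ) :=
    integral_eq_of_hasDerivAt_sub_of_periodic (F := fun x => iteratedDeriv 2 U x ^ 2 / 2)
      (by fun_prop) (by fun_prop) (fun x => ((hU2 x).pow 2 |>.div_const _).congr_deriv (by ring))
      ((hper.iteratedDeriv 2).comp fun v => v ^ 2 / 2)
  rw [hnonlin, hdisp, intervalIntegral.integral_zero, Complex.ofReal_zero, sub_zero] at hpair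
  exact_mod_cast hpair

theorem integral_pow_four_mul_eq (hS : S.map (Equiv.neg ℤ).toEmbedding = S)
    (hU : ContDiff ℝ 3 U) (hper : Periodic U (2 * π)) (hUS : ∀ x, (U x : ℂ) = fourierProj S U x)
    (hW : ∀ x, ((W x + iteratedDeriv 3 U x : ℝ) : ℂ) =
      fourierProj S (fun y => (U y ^ 3 - m) * deriv U y) x) :
    ∫ x in (0:ℝ)..2 * π, U x ^ 4 * W x =
      4 * ∫ x in (0:ℝ)..2 * π, U x ^ 3 * deriv U x * iteratedDeriv 2 U x := by
  have hU0 : ∀ x, HasDerivAt U (deriv U x) x := fun x =>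
    (hU.differentiable (by norm_num) x).hasDerivAt
  have hU2 := hU.hasDerivAt_iteratedDeriv (k := 2) (by norm_num)
  have hc1 : Continuous (deriv U) := hU.continuous_deriv (by norm_num)
  have hc2 := hU.continuous_iteratedDeriv 2 (by norm_num)
  have hc3 := hU.continuous_iteratedDeriv 3 le_rfl
  have hc0 := hU.continuous
  have hPw := continuous_fourierProj S (fun y => (U y ^ 3 - m) * deriv U y)
  have hpair := ofReal_integral_mul_eq_integral_mul_fourierProj_sub (g := fun x => U x ^ 4) hc3 hW
    (by fun_prop)
  -- `U⁴ = 4 q + 4 m U`, where `q = U⁴/4 - m U` is a primitive of the nonlinearity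
  have hq : ∀ x, HasDerivAt (fun y => U y ^ 4 / 4 - m * U y) ((U x ^ 3 - m) * deriv U x) x :=
    fun x => (((hU0 x).pow 4).div_const 4 |>.sub ((hU0 x).const_mul m)).congr_deriv (by ring)
  have hsplit : ∀ x, ((U x ^ 4 : ℝ) : ℂ) * fourierProj S (fun y => (U y ^ 3 - m) * deriv U y) x =
      4 * (((U x ^ 4 / 4 - m * U x : ℝ) : ℂ) * fourierProj S (fun y => (U y ^ 3 - m) * deriv U y) x)
        + 4 * m * ((U x : ℂ) * fourierProj S (fun y => (U y ^ 3 - m) * deriv U y) x) :=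
    fun x => by push_cast; ring
  have hmean :
      ∫ x in (0:ℝ)..2 * π, (U x ^ 3 - m) * deriv U x * U x = ∫ x in (0:ℝ)..2 * π, (0 : ℝ) :=
    integral_eq_of_hasDerivAt_sub_of_periodic (F := fun x => U x ^ 5 / 5 - m / 2 * U x ^ 2)
      (by fun_prop) (by fun_prop)
      (fun x => (((hU0 x).pow 5).div_const 5 |>.sub (((hU0 x).pow 2).const_mul _)).congr_deriv
        (by ring))
      (hper.comp fun v => v ^ 5 / 5 - m / 2 * v ^ 2)
  have hproj : ∫ x in (0:ℝ)..2 * π,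
      ((U x ^ 4 : ℝ) : ℂ) * fourierProj S (fun y => (U y ^ 3 - m) * deriv U y) x = 0 := by
    simp_rw [hsplit]
    rw [intervalIntegral.integral_add ((by fun_prop : Continuous _).intervalIntegrable _ _)
      ((by fun_prop : Continuous _).intervalIntegrable _ _), intervalIntegral.integral_const_mul,
      intervalIntegral.integral_const_mul,
      integral_ofReal_mul_fourierProj_deriv_self hS hq (by fun_prop)
        (hper.comp fun v => v ^ 4 / 4 - m * v),
      integral_ofReal_mul_fourierProj_of_fixed hS (by fun_prop) hc0 hUS, hmean]
    simp
  have hthird : ∫ x in (0:ℝ)..2 * π, U x ^ 4 * iteratedDeriv 3 U x =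
      ∫ x in (0:ℝ)..2 * π, -(4 * (U x ^ 3 * deriv U x * iteratedDeriv 2 U x)) :=
    integral_eq_of_hasDerivAt_sub_of_periodic (F := fun x => U x ^ 4 * iteratedDeriv 2 U x)
      (by fun_prop) (by fun_prop)
      (fun x => (((hU0 x).fun_pow 4).mul (hU2 x)).congr_deriv (by push_cast; ring))
      ((hper.comp fun v => v ^ 4).mul (hper.iteratedDeriv 2))
  rw [hproj, hthird, intervalIntegral.integral_neg, intervalIntegral.integral_const_mul, zero_sub,
    ← Complex.ofReal_neg, neg_neg] at hpair
  exact_mod_cast hpair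

end FixedTime

theorem hamiltonian_conserved_truncated_gkdv_general (N : ℕ) (u : ℝ → ℝ → ℝ)
    (hsmooth : ContDiff ℝ (⊤ : ℕ∞) (Function.uncurry u))
    (hper : ∀ x t : ℝ, u (x + 2 * π) t = u x t)
    (hEN : ∀ t x : ℝ, ((u x t : ℝ) : ℂ) =
      ∑ n ∈ (Finset.Icc (-(N : ℤ)) (N : ℤ)).erase 0,
        fourierCoefOn (fun y => u y t) n * Complex.exp (Complex.I * n * x))
    (hPDE : ∀ x t : ℝ,
      ((deriv (fun s => u x s) t + iteratedDeriv 3 (fun y => u y t) x : ℝ) : ℂ) =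
        ∑ n ∈ (Finset.Icc (-(N : ℤ)) (N : ℤ)).erase 0,
          fourierCoefOn (fun y =>
              (u y t ^ 3 - (1 / (2 * π)) * ∫ z in (0:ℝ)..(2 * π), u z t ^ 3) *
                deriv (fun w => u w t) y) n * Complex.exp (Complex.I * n * x)) :
    ∀ t₁ t₂ : ℝ,
      (1 / 2) * (∫ x in (0:ℝ)..(2 * π), (deriv (fun y => u y t₁) x) ^ 2) +
          (1 / 20) * (∫ x in (0:ℝ)..(2 * π), u x t₁ ^ 5) =
        (1 / 2) * (∫ x in (0:ℝ)..(2 * π), (deriv (fun y => u y t₂) x) ^ 2) +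
          (1 / 20) * (∫ x in (0:ℝ)..(2 * π), u x t₂ ^ 5) := by
  have hS : ((Finset.Icc (-(N : ℤ)) N).erase 0).map (Equiv.neg ℤ).toEmbedding =
      (Finset.Icc (-(N : ℤ)) N).erase 0 := by
    ext n
    simp only [Finset.mem_map_equiv, Finset.mem_erase, Finset.mem_Icc, Equiv.neg_symm,
      Equiv.neg_apply]
    omega
  have hperiodic : ∀ t, Periodic (fun x => u x t) (2 * π) := fun t x => hper x t
  have hslice : ∀ t, ContDiff ℝ 3 (fun x => u x t) := fun t =>
    (hsmooth.comp (contDiff_id.prodMk contDiff_const)).of_le (by norm_cast)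
  have hconst : ∀ t, HasDerivAt (fun t =>
      1 / 2 * (∫ x in (0:ℝ)..2 * π, partialX u x t ^ 2) + 1 / 20 * ∫ x in (0:ℝ)..2 * π, u x t ^ 5)
      0 t := fun t => by
    have h2 := integral_iteratedDeriv_two_mul_eq hS (hslice t) (hperiodic t) (hEN t) (hPDE · t)
    have h4 := integral_pow_four_mul_eq hS (hslice t) (hperiodic t) (hEN t) (hPDE · t)
    refine (hasDerivAt_hamiltonian hsmooth hperiodic t).congr_deriv ?_
    simp only [partialT]
    rw [h2, h4]
    ring
  exact fun t₁ t₂ => is_const_of_deriv_eq_zero (fun t => (hconst t).differentiableAt)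
    (fun t => (hconst t).deriv) t₁ t₂

/-- **Conservation of the Hamiltonian for the truncated gauge-transformed quartic gKdV.**
Let `u : ℝ × ℝ → ℝ` be `C^∞`, `2π`-periodic in its first argument, with `u(·,t) ∈ E_N`
(a real trigonometric polynomial with frequencies `0 < |n| ≤ N`) for every `t`, solving
`∂ₜ u + ∂ₓ³ u = ℙ_N(ℙ(u³) ∂ₓ u)`.  Then
`t ↦ (1/2)∫₀^{2π} (∂ₓ u)² dx + (1/20)∫₀^{2π} u⁵ dx` is constant on `ℝ`. -/
theorem hamiltonian_conserved_truncated_gkdv (N : ℕ) (hN : 1 ≤ N) (u : ℝ → ℝ → ℝ)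
    (hsmooth : ContDiff ℝ (⊤ : ℕ∞) (Function.uncurry u))
    (hper : ∀ x t : ℝ, u (x + 2 * π) t = u x t)
    (hEN : ∀ t x : ℝ, ((u x t : ℝ) : ℂ) =
      ∑ n ∈ (Finset.Icc (-(N : ℤ)) (N : ℤ)).erase 0,
        fourierCoefOn (fun y => u y t) n * Complex.exp (Complex.I * n * x))
    (hPDE : ∀ x t : ℝ,
      ((deriv (fun s => u x s) t + iteratedDeriv 3 (fun y => u y t) x : ℝ) : ℂ) =
        ∑ n ∈ (Finset.Icc (-(N : ℤ)) (N : ℤ)).erase 0,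
          fourierCoefOn (fun y =>
              (u y t ^ 3 - (1 / (2 * π)) * ∫ z in (0:ℝ)..(2 * π), u z t ^ 3) *
                deriv (fun w => u w t) y) n * Complex.exp (Complex.I * n * x)) :
    ∀ t₁ t₂ : ℝ,
      (1 / 2) * (∫ x in (0:ℝ)..(2 * π), (deriv (fun y => u y t₁) x) ^ 2) +
          (1 / 20) * (∫ x in (0:ℝ)..(2 * π), u x t₁ ^ 5) =
        (1 / 2) * (∫ x in (0:ℝ)..(2 * π), (deriv (fun y => u y t₂) x) ^ 2) +
          (1 / 20) * (∫ x in (0:ℝ)..(2 * π), u x t₂ ^ 5) :=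
  hamiltonian_conserved_truncated_gkdv_general N u hsmooth hper hEN hPDE
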